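/- Let Γ be the semidirect product (ℚ³ ⊕ ℚ³) ⋊ SL(3,ℚ) and Λ the subgroup ℤ³ ⊕ ℤ³ of Γ. Then for every g ∈ Γ there exists a finite index subgroup Λ₀ of Λ such that gΛ₀g⁻¹ ⊆ Λ. -/

import Mathlib

open Matrix

/-- The additive group `R³ ⊕ R³`. -/
abbrev VV (R : Type*) := (Fin 3 → R) × (Fin 3 → R)

/-- Transpose, as a map on `SL(3,R)`. -/
def transposeSL {R : Type*} [CommRing R] (A : Matrix.SpecialLinearGroup (Fin 3) R) :
    Matrix.SpecialLinearGroup (Fin 3) R :=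
  ⟨A.val.transpose, by rw [Matrix.det_transpose]; exact A.prop⟩

/-- The group homomorphism `A ↦ (Aᵀ)⁻¹` on `SL(3,R)`. -/
def dualHom {R : Type*} [CommRing R] :
    Matrix.SpecialLinearGroup (Fin 3) R →* Matrix.SpecialLinearGroup (Fin 3) R where
  toFun A := (transposeSL A)⁻¹
  map_one' := by
    have h : transposeSL (1 : Matrix.SpecialLinearGroup (Fin 3) R) = 1 :=
      Subtype.ext (by simp [transposeSL] <;> rfl)
    show (transposeSL 1)⁻¹ = 1
    rw [h, inv_one]
  map_mul' A B := by
    show (transposeSL (A * B))⁻¹ = (transposeSL A)⁻¹ * (transposeSL B)⁻¹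
    have h : transposeSL (A * B) = transposeSL B * transposeSL A :=
      Subtype.ext (by simp [transposeSL, Matrix.transpose_mul] <;> rfl)
    rw [h, _root_.mul_inv_rev]

/-- The multiplicative group structure that `AddAut A` carried in older Mathlib
(`e * f = f.trans e`, `1 = refl`, `e⁻¹ = e.symm`); Mathlib now makes `AddAut A` an additive group. -/
instance addAutGroupOld {A : Type*} [Add A] : Group (AddAut A) where
  mul g h := AddEquiv.trans h g
  one := AddEquiv.refl A
  inv := AddEquiv.symm
  mul_assoc _ _ _ := rfl
  one_mul _ := rfl
  mul_one _ := rfl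
  inv_mul_cancel e := by ext x; exact e.symm_apply_apply x

/-- Linear automorphisms as additive automorphisms, as a group homomorphism. -/
def linToAddAut {R : Type*} [CommRing R] :
    ((Fin 3 → R) ≃ₗ[R] (Fin 3 → R)) →* AddAut (Fin 3 → R) where
  toFun e := e.toAddEquiv
  map_one' := rfl
  map_mul' _ _ := rfl

/-- Pairs of additive automorphisms give additive automorphisms of the product. -/
def addAutProd {R : Type*} [CommRing R] :
    AddAut (Fin 3 → R) × AddAut (Fin 3 → R) →* AddAut (VV R) where
  toFun p := AddEquiv.prodCongr p.1 p.2
  map_one' := rfl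
  map_mul' _ _ := rfl

/-- The action of `SL(3,R)` on `R³ ⊕ R³` given by `A · (x,y) = (Ax, (Aᵀ)⁻¹y)`,
as a homomorphism into additive automorphisms. -/
noncomputable def sl3Act {R : Type*} [CommRing R] :
    Matrix.SpecialLinearGroup (Fin 3) R →* AddAut (VV R) :=
  addAutProd.comp
    (((linToAddAut.comp Matrix.SpecialLinearGroup.toLin')).prod
      ((linToAddAut.comp Matrix.SpecialLinearGroup.toLin').comp dualHom))

/-- Additive automorphisms as multiplicative automorphisms of `Multiplicative`. -/
def addAutToMulAut {A : Type*} [AddGroup A] : AddAut A →* MulAut (Multiplicative A) where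
  toFun e := AddEquiv.toMultiplicative e
  map_one' := rfl
  map_mul' _ _ := rfl

/-- The action of `SL(3,R)` on `Multiplicative (R³ ⊕ R³)`. -/
noncomputable def sl3ActM (R : Type*) [CommRing R] :
    Matrix.SpecialLinearGroup (Fin 3) R →* MulAut (Multiplicative (VV R)) :=
  addAutToMulAut.comp sl3Act

/-- The group `Γ_R = (R³ ⊕ R³) ⋊ SL(3,R)`. -/
abbrev GammaR (R : Type*) [CommRing R] :=
  SemidirectProduct (Multiplicative (VV R)) (Matrix.SpecialLinearGroup (Fin 3) R) (sl3ActM R)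

/-- Coordinatewise integer casting `ℤ³ → ℚ³` as an additive homomorphism. -/
def intCast3 : (Fin 3 → ℤ) →+ (Fin 3 → ℚ) := (Int.castAddHom ℚ).compLeft (Fin 3)

/-- The inclusion `ℤ³ ⊕ ℤ³ → ℚ³ ⊕ ℚ³`. -/
def intVec : VV ℤ →+ VV ℚ := intCast3.prodMap intCast3

/-- The subgroup `Λ = ℤ³ ⊕ ℤ³` of `Γ = (ℚ³ ⊕ ℚ³) ⋊ SL(3,ℚ)`. -/
noncomputable def LambdaSub : Subgroup (GammaR ℚ) :=
  (AddSubgroup.toSubgroup intVec.range).map SemidirectProduct.inl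

/-- The dot product on `R³`. -/
def dotR {R : Type*} [CommRing R] (x y : Fin 3 → R) : R := ∑ i, x i * y i

/-- The 2-cocycle `Ω_α` on `ℚ³ ⊕ ℚ³`. -/
noncomputable def OmegaQ (α : ℝ) (g h : VV ℚ) : Circle :=
  Circle.exp (2 * Real.pi * α * ((dotR g.1 h.2 - dotR g.2 h.1 : ℚ) : ℝ))

/-- The extension `Ω̃_α` of `Ω_α` to `Γ = (ℚ³ ⊕ ℚ³) ⋊ SL(3,ℚ)`. -/
noncomputable def OmegaT (α : ℝ) (g h : GammaR ℚ) : Circle :=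
  OmegaQ α (Multiplicative.toAdd g.left) (sl3Act g.right (Multiplicative.toAdd h.left))

/-! If `g = (v, A)`, conjugation by `g` sends `(w, 1)` to `(A · w, 1)`, the translation part acting
trivially because `ℚ³ ⊕ ℚ³` is abelian. Choosing `d` divisible by the denominators of all entries
of `A` and `(Aᵀ)⁻¹`, both matrices map `(dℤ)³` into `ℤ³`, so `Λ₀ = (dℤ)³ ⊕ (dℤ)³` works; its index in
`Λ` is `d⁶`. -/

open SemidirectProduct

theorem Rat.exists_den_dvd {ι : Type*} [Fintype ι] (f : ι → ℚ) :
    ∃ d : ℕ, d ≠ 0 ∧ ∀ i, (f i).den ∣ d :=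
  ⟨∏ i, (f i).den, Finset.prod_ne_zero_iff.2 fun i _ => (f i).den_ne_zero,
    fun i => Finset.dvd_prod_of_mem _ (Finset.mem_univ i)⟩

theorem Rat.exists_intCast_eq_mul_of_den_dvd {q : ℚ} {a : ℤ} (h : (q.den : ℤ) ∣ a) :
    ∃ z : ℤ, (z : ℚ) = q * a := by
  obtain ⟨k, rfl⟩ := h
  refine ⟨q.num * k, ?_⟩
  push_cast
  rw [← mul_assoc, Rat.mul_den_eq_num]

theorem Matrix.exists_mulVec_intCast_eq_intCast {m n : Type*} [Fintype n] (M : Matrix m n ℚ)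
    {d : ℕ} (hM : ∀ i j, (M i j).den ∣ d) {w : n → ℤ} (hw : ∀ j, (d : ℤ) ∣ w j) :
    ∃ u : m → ℤ, M *ᵥ (fun j => (w j : ℚ)) = fun i => (u i : ℚ) := by
  choose z hz using fun i j =>
    Rat.exists_intCast_eq_mul_of_den_dvd ((Int.natCast_dvd_natCast.2 (hM i j)).trans (hw j))
  exact ⟨fun i => ∑ j, z i j, funext fun i => by simp [Matrix.mulVec, dotProduct, hz]⟩

theorem SemidirectProduct.mul_inl_mul_inv {N G : Type*} [CommGroup N] [Group G]
    {φ : G →* MulAut N} (g : N ⋊[φ] G) (n : N) : g * inl n * g⁻¹ = inl (φ g.right n) := by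
  ext <;> simp [mul_comm]

theorem intVec_injective : Function.Injective intVec :=
  (Int.cast_injective.comp_left).prodMap Int.cast_injective.comp_left

def scaledLattice (d : ℕ) : AddSubgroup (VV ℤ) :=
  (AddSubgroup.pi Set.univ fun _ => AddSubgroup.zmultiples (d : ℤ)).prod
    (AddSubgroup.pi Set.univ fun _ => AddSubgroup.zmultiples (d : ℤ))

theorem index_scaledLattice (d : ℕ) : (scaledLattice d).index = d ^ 6 := by
  simp only [scaledLattice, AddSubgroup.index_prod, AddSubgroup.index_pi, Int.index_zmultiples,
    Int.natAbs_natCast, Finset.prod_const, Finset.card_univ, Fintype.card_fin]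
  ring

theorem sl3Act_intVec_mem_range {A : Matrix.SpecialLinearGroup (Fin 3) ℚ} {d : ℕ}
    (hA : ∀ i j, (A i j).den ∣ d) (hA' : ∀ i j, (dualHom A i j).den ∣ d) {v : VV ℤ}
    (hv : v ∈ scaledLattice d) : sl3Act A (intVec v) ∈ intVec.range := by
  simp only [scaledLattice, AddSubgroup.mem_prod, AddSubgroup.mem_pi, Set.mem_univ,
    Int.mem_zmultiples_iff, forall_const] at hv
  obtain ⟨u₁, hu₁⟩ := Matrix.exists_mulVec_intCast_eq_intCast _ hA hv.1
  obtain ⟨u₂, hu₂⟩ := Matrix.exists_mulVec_intCast_eq_intCast _ hA' hv.2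
  exact ⟨(u₁, u₂), Prod.ext hu₁.symm hu₂.symm⟩

noncomputable def latticeSubgroup (H : AddSubgroup (VV ℤ)) : Subgroup (GammaR ℚ) :=
  (AddSubgroup.toSubgroup (H.map intVec)).map inl

theorem LambdaSub_eq_latticeSubgroup_top : LambdaSub = latticeSubgroup ⊤ := by
  rw [LambdaSub, latticeSubgroup, AddMonoidHom.range_eq_map]

theorem relIndex_latticeSubgroup (H : AddSubgroup (VV ℤ)) :
    (latticeSubgroup H).relIndex LambdaSub = H.index := by
  rw [LambdaSub_eq_latticeSubgroup_top, latticeSubgroup, latticeSubgroup,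
    Subgroup.relIndex_map_map_of_injective _ _ inl_injective, AddSubgroup.relIndex_toSubgroup,
    AddSubgroup.relIndex_map_map_of_injective _ _ intVec_injective, AddSubgroup.relIndex_top_right]

theorem inl_mem_LambdaSub_iff (n : Multiplicative (VV ℚ)) :
    (inl n : GammaR ℚ) ∈ LambdaSub ↔ n.toAdd ∈ intVec.range :=
  Subgroup.mem_map_iff_mem inl_injective

/-- For every `g ∈ Γ = (ℚ³ ⊕ ℚ³) ⋊ SL(3,ℚ)` there exists a finite index
subgroup `Λ₀` of `Λ = ℤ³ ⊕ ℤ³` such that `gΛ₀g⁻¹ ⊆ Λ`. -/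
theorem exists_finiteIndex_subgroup_conj_subset (g : GammaR ℚ) :
    ∃ Λ₀ : Subgroup (GammaR ℚ), Λ₀ ≤ LambdaSub ∧ Λ₀.relIndex LambdaSub ≠ 0 ∧
      ∀ x ∈ Λ₀, g * x * g⁻¹ ∈ LambdaSub := by
  obtain ⟨d, hd, hden⟩ := Rat.exists_den_dvd <| Sum.elim
    (fun p : Fin 3 × Fin 3 => g.right p.1 p.2) (fun p : Fin 3 × Fin 3 => dualHom g.right p.1 p.2)
  refine ⟨latticeSubgroup (scaledLattice d), ?_, ?_, ?_⟩
  · rw [LambdaSub_eq_latticeSubgroup_top]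
    exact Subgroup.map_mono (AddSubgroup.toSubgroup.le_iff_le.2 (AddSubgroup.map_mono le_top))
  · rw [relIndex_latticeSubgroup, index_scaledLattice]
    positivity
  · rintro _ ⟨_, ⟨v, hv, rfl⟩, rfl⟩
    show g * inl (.ofAdd (intVec v)) * g⁻¹ ∈ LambdaSub
    rw [mul_inl_mul_inv, inl_mem_LambdaSub_iff]
    exact sl3Act_intVec_mem_range (fun i j => hden (.inl (i, j))) (fun i j => hden (.inr (i, j))) hv
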